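/- arXiv:2411.17434 — 5 statements merged into one kernel-verified Lean document; each statement's English description precedes it below -/
import Mathlib

section
/- Let V be a finite-dimensional complex Hilbert space, G ≤ U(V) a finite subgroup, and v ∈ V a point such that (i) the map g ↦ gv is injective on G, and (ii) for all h, k ∈ G, ⟨v, hv⟩ = ⟨v, kv⟩ implies h = k. Then every permutation σ of the orbit Gv that preserves all pairwise inner products (⟨σ(x), σ(y)⟩ = ⟨x, y⟩ for all x, y ∈ Gv) is given by the action of a unique element of G; in particular the canonical map G → Aut(Gv) is a group isomorphism onto the group of such permutations. -/
open scoped InnerProductSpace ComplexInnerProductSpace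

/-- One-orbit theorem (complex case): if `g ↦ g v` is injective on the finite
unitary group `G` and the values `⟪v, g v⟫` distinguish elements of `G`, then every
inner-product-preserving permutation of the orbit `G v` is induced by a unique
element of `G`; hence the canonical map `G → Aut(G v)` is an isomorphism. -/
theorem stmt_9 (V : Type*) [NormedAddCommGroup V] [InnerProductSpace ℂ V]
    [FiniteDimensional ℂ V] (G : Subgroup (V ≃ₗᵢ[ℂ] V)) [Finite G] (v : V)
    (h1 : Function.Injective fun g : G => (g : V ≃ₗᵢ[ℂ] V) v)
    (h2 : ∀ h k : G,
      ⟪v, (h : V ≃ₗᵢ[ℂ] V) v⟫_ℂ = ⟪v, (k : V ≃ₗᵢ[ℂ] V) v⟫_ℂ → h = k)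
    (σ : Equiv.Perm (Set.range fun g : G => (g : V ≃ₗᵢ[ℂ] V) v))
    (hσ : ∀ x y : (Set.range fun g : G => (g : V ≃ₗᵢ[ℂ] V) v),
      ⟪(σ x : V), (σ y : V)⟫_ℂ = ⟪(x : V), (y : V)⟫_ℂ) :
    ∃! g : G, ∀ x : (Set.range fun g : G => (g : V ≃ₗᵢ[ℂ] V) v),
      (σ x : V) = (g : V ≃ₗᵢ[ℂ] V) x := by
  have hv : v ∈ Set.range fun g : G => (g : V ≃ₗᵢ[ℂ] V) v := ⟨1, by simp⟩
  obtain ⟨g₀, hg₀⟩ := (σ ⟨v, hv⟩).2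
  simp only at hg₀
  refine ⟨g₀, ?_, ?_⟩
  · rintro ⟨x, h, rfl⟩
    simp only
    obtain ⟨k, hk⟩ := (σ ⟨_, ⟨h, rfl⟩⟩).2
    simp only at hk
    have key := hσ ⟨v, hv⟩ ⟨_, ⟨h, rfl⟩⟩
    rw [← hg₀, ← hk] at key
    have key2 : ⟪v, ((g₀⁻¹ * k : G) : V ≃ₗᵢ[ℂ] V) v⟫_ℂ
        = ⟪v, (h : V ≃ₗᵢ[ℂ] V) v⟫_ℂ := by
      rw [← key]
      have := LinearIsometryEquiv.inner_map_map (g₀ : V ≃ₗᵢ[ℂ] V) v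
        (((g₀⁻¹ * k : G) : V ≃ₗᵢ[ℂ] V) v)
      rw [← this]
      congr 1
      simp [LinearIsometryEquiv.coe_mul]
    have hkh : g₀⁻¹ * k = h := h2 _ _ key2
    have : k = g₀ * h := by rw [← hkh]; group
    rw [← hk, this]
    simp [LinearIsometryEquiv.coe_mul]
  · intro g hg
    apply h1
    have := hg ⟨v, hv⟩
    simp only at this
    exact this.symm.trans hg₀.symm
end

section
/- Let V be a finite-dimensional Hilbert space and G ≤ Aut(V) a finite group of linear isometries. Let v, w ∈ V be such that g ↦ ‖v − gw‖ is injective on G and |Gv| = |Gw| = |G|. Define β : Gv → Gw by β(x) = argmin_{y ∈ Gw} ‖x − y‖. Then β is a well-defined G-equivariant bijection, and moreover β∘σ = σ∘β for every permutation σ of Gv ∪ Gw that extends to a linear isometry of V and maps Gv to Gv and Gw to Gw. -/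
/-!
Translating by `a⁻¹` shows `‖a v - b w‖ = ‖v - (a⁻¹ b) w‖`, so the injectivity hypothesis says that
from every point of `Gv` the points of `Gw` lie at pairwise distinct distances; in particular the
nearest point is unique and the action on `Gw` is free. An isometry mapping `Gw` onto itself
carries nearest points to nearest points, hence commutes with `β` by uniqueness;
this applies both to the elements of `G` and to the symmetries `σ`, the latter mapping the finite
set `Gw` injectively into, hence onto, itself. Equivariance gives `β (a v) = a b w` where
`β v = b w`, and freeness on `Gw` makes this a bijection.
-/

open Function Set

section NearestPoint

variable {X : Type*} [PseudoMetricSpace X] {S T : Set X}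

def IsNearestPointMap (S T : Set X) (β : S → T) : Prop :=
  ∀ (x : S) (y : T), dist (x : X) (β x) ≤ dist (x : X) y

variable {β : S → T}

theorem IsNearestPointMap.eq_of_forall_dist_le (hβ : IsNearestPointMap S T β)
    (hT : ∀ x ∈ S, InjOn (dist x) T) {x : S} {y : T}
    (hy : ∀ y' : T, dist (x : X) y ≤ dist (x : X) y') : y = β x :=
  Subtype.ext <| hT x x.2 y.2 (β x).2 <| le_antisymm (hy (β x)) (hβ x y)

theorem IsNearestPointMap.coe_apply_eq_of_isometry (hβ : IsNearestPointMap S T β)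
    (hT : ∀ x ∈ S, InjOn (dist x) T) {f : X → X} (hf : Isometry f) (hfT : f '' T = T)
    {x x' : S} (hx' : (x' : X) = f x) : (β x' : X) = f (β x) := by
  have hfβ : f (β x) ∈ T := hfT.subset (mem_image_of_mem f (β x).2)
  refine congrArg Subtype.val (hβ.eq_of_forall_dist_le hT (y := ⟨f (β x), hfβ⟩) ?_).symm
  rintro ⟨_, hy'⟩
  rw [← hfT] at hy'
  obtain ⟨y₀, hy₀, rfl⟩ := hy'
  rw [hx', hf.dist_eq, hf.dist_eq]
  exact hβ x ⟨y₀, hy₀⟩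

end NearestPoint

section IsometryOrbit

variable {R V : Type*} [Semiring R] [SeminormedAddCommGroup V] [Module R V]
  {G : Subgroup (V ≃ₗᵢ[R] V)}

theorem norm_apply_sub_apply (a b : G) (v w : V) :
    ‖(a : V ≃ₗᵢ[R] V) v - (b : V ≃ₗᵢ[R] V) w‖ = ‖v - ((a⁻¹ * b : G) : V ≃ₗᵢ[R] V) w‖ := by
  rw [← ((a⁻¹ : G) : V ≃ₗᵢ[R] V).norm_map, map_sub]
  simp

theorem injOn_dist_range_apply {v w : V}
    (hinj : Injective fun g : G => ‖v - (g : V ≃ₗᵢ[R] V) w‖) :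
    ∀ x ∈ range (fun g : G => (g : V ≃ₗᵢ[R] V) v),
      InjOn (dist x) (range fun g : G => (g : V ≃ₗᵢ[R] V) w) := by
  rintro _ ⟨a, rfl⟩ _ ⟨b, rfl⟩ _ ⟨c, rfl⟩ h
  simp only [dist_eq_norm, norm_apply_sub_apply] at h
  rw [mul_left_cancel (hinj h)]

theorem image_range_apply (g : G) (w : V) :
    (g : V ≃ₗᵢ[R] V) '' range (fun h : G => (h : V ≃ₗᵢ[R] V) w) =
      range fun h : G => (h : V ≃ₗᵢ[R] V) w := by
  rw [← Set.range_comp,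
    ← (Group.mulLeft_bijective g).surjective.range_comp fun h : G => (h : V ≃ₗᵢ[R] V) w]
  rfl

theorem bijective_of_coe_apply_eq {v w : V}
    (hfree : Injective fun g : G => (g : V ≃ₗᵢ[R] V) w)
    {β : range (fun g : G => (g : V ≃ₗᵢ[R] V) v) → range fun g : G => (g : V ≃ₗᵢ[R] V) w}
    (hβ : ∀ (g : G) (x x' : range fun g : G => (g : V ≃ₗᵢ[R] V) v),
      (x' : V) = (g : V ≃ₗᵢ[R] V) x → (β x' : V) = (g : V ≃ₗᵢ[R] V) (β x)) :
    Bijective β := by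
  obtain ⟨b, hb⟩ := (β ⟨v, 1, rfl⟩).2
  have hβa (a : G) : (β ⟨_, a, rfl⟩ : V) = ((a * b : G) : V ≃ₗᵢ[R] V) w := by
    rw [hβ a ⟨v, 1, rfl⟩ _ rfl, ← hb]
    rfl
  constructor
  · rintro ⟨_, a, rfl⟩ ⟨_, a', rfl⟩ h
    have hab : ((a * b : G) : V ≃ₗᵢ[R] V) w = ((a' * b : G) : V ≃ₗᵢ[R] V) w := by
      rw [← hβa, ← hβa, h]
    rw [mul_right_cancel (hfree hab)]
  · rintro ⟨_, c, rfl⟩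
    exact ⟨⟨_, c * b⁻¹, rfl⟩, Subtype.ext <| (hβa _).trans <| by rw [inv_mul_cancel_right]⟩

end IsometryOrbit

theorem stmt_12_general (𝕜 : Type*) [RCLike 𝕜] (V : Type*) [NormedAddCommGroup V]
    [InnerProductSpace 𝕜 V]
    (G : Subgroup (V ≃ₗᵢ[𝕜] V)) [Finite G] (v w : V)
    (Sv Sw : Set V)
    (hSv : Sv = Set.range fun g : G => (g : V ≃ₗᵢ[𝕜] V) v)
    (hSw : Sw = Set.range fun g : G => (g : V ≃ₗᵢ[𝕜] V) w)
    (hinj : Function.Injective fun g : G => ‖v - (g : V ≃ₗᵢ[𝕜] V) w‖)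
    (β : Sv → Sw)
    (hβ : ∀ x : Sv, ∀ y : Sw, ‖(x : V) - (β x : V)‖ ≤ ‖(x : V) - (y : V)‖) :
    -- the argmin is unique, so `β` is well defined
    (∀ x : Sv, ∀ y : Sw, (∀ y' : Sw, ‖(x : V) - (y : V)‖ ≤ ‖(x : V) - (y' : V)‖)
        → y = β x) ∧
    -- `β` is a bijection
    Function.Bijective β ∧
    -- `β` is `G`-equivariant
    (∀ (g : G) (x x' : Sv), (x' : V) = (g : V ≃ₗᵢ[𝕜] V) (x : V) →
      (β x' : V) = (g : V ≃ₗᵢ[𝕜] V) (β x : V)) ∧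
    -- `β` commutes with every symmetry of `Gv ∪ Gw`
    (∀ σ : Equiv.Perm (Sv ∪ Sw : Set V),
      (∃ M : V ≃ₗᵢ[𝕜] V, ∀ x : (Sv ∪ Sw : Set V), (σ x : V) = M x) →
      (∀ x : (Sv ∪ Sw : Set V), ((x : V) ∈ Sv → (σ x : V) ∈ Sv) ∧
        ((x : V) ∈ Sw → (σ x : V) ∈ Sw)) →
      ∀ (x : Sv) (h1 : (x : V) ∈ Sv ∪ Sw) (h2 : ((β x : V)) ∈ Sv ∪ Sw)
        (hσx : (σ ⟨(x : V), h1⟩ : V) ∈ Sv),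
        (σ ⟨(β x : V), h2⟩ : V) = (β ⟨(σ ⟨(x : V), h1⟩ : V), hσx⟩ : V)) := by
  subst hSv hSw
  have hnear : IsNearestPointMap _ _ β := by simpa only [IsNearestPointMap, dist_eq_norm] using hβ
  have hdist := injOn_dist_range_apply hinj
  have hequiv (g : G) (x x' : range fun g : G => (g : V ≃ₗᵢ[𝕜] V) v)
      (hx' : (x' : V) = (g : V ≃ₗᵢ[𝕜] V) x) : (β x' : V) = (g : V ≃ₗᵢ[𝕜] V) (β x) :=
    hnear.coe_apply_eq_of_isometry hdist (g : V ≃ₗᵢ[𝕜] V).isometry (image_range_apply g w) hx'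
  have hfree : Injective fun g : G => (g : V ≃ₗᵢ[𝕜] V) w :=
    Injective.of_comp (f := fun y => ‖v - y‖) hinj
  refine ⟨fun x y hy => hnear.eq_of_forall_dist_le hdist (by simpa only [dist_eq_norm] using hy),
    bijective_of_coe_apply_eq hfree hequiv, hequiv, ?_⟩
  rintro σ ⟨M, hM⟩ hpres x h1 h2 hσx
  have hMw : MapsTo M (range fun g : G => (g : V ≃ₗᵢ[𝕜] V) w)
      (range fun g : G => (g : V ≃ₗᵢ[𝕜] V) w) := fun y hy =>
    hM ⟨y, Or.inr hy⟩ ▸ (hpres ⟨y, Or.inr hy⟩).2 hy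
  have hMw_eq := (((finite_range _).injOn_iff_bijOn_of_mapsTo hMw).mp M.injective.injOn).image_eq
  exact (hM _).trans (hnear.coe_apply_eq_of_isometry hdist M.isometry hMw_eq (hM _)).symm

/-- Orbit pairing lemma: if `g ↦ ‖v - g w‖` is injective on `G` and both orbits have
`|G|` elements, then the nearest-point map `β : Gv → Gw` is a well-defined (unique
argmin) `G`-equivariant bijection, and `β ∘ σ = σ ∘ β` for every permutation `σ` of
`Gv ∪ Gw` extending to a linear isometry and preserving each orbit. -/
theorem stmt_12 (𝕜 : Type*) [RCLike 𝕜] (V : Type*) [NormedAddCommGroup V]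
    [InnerProductSpace 𝕜 V] [FiniteDimensional 𝕜 V]
    (G : Subgroup (V ≃ₗᵢ[𝕜] V)) [Finite G] (v w : V)
    (Sv Sw : Set V)
    (hSv : Sv = Set.range fun g : G => (g : V ≃ₗᵢ[𝕜] V) v)
    (hSw : Sw = Set.range fun g : G => (g : V ≃ₗᵢ[𝕜] V) w)
    (hinj : Function.Injective fun g : G => ‖v - (g : V ≃ₗᵢ[𝕜] V) w‖)
    (hcv : Sv.ncard = Nat.card G) (hcw : Sw.ncard = Nat.card G)
    (β : Sv → Sw)
    (hβ : ∀ x : Sv, ∀ y : Sw, ‖(x : V) - (β x : V)‖ ≤ ‖(x : V) - (y : V)‖) :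
    -- the argmin is unique, so `β` is well defined
    (∀ x : Sv, ∀ y : Sw, (∀ y' : Sw, ‖(x : V) - (y : V)‖ ≤ ‖(x : V) - (y' : V)‖)
        → y = β x) ∧
    -- `β` is a bijection
    Function.Bijective β ∧
    -- `β` is `G`-equivariant
    (∀ (g : G) (x x' : Sv), (x' : V) = (g : V ≃ₗᵢ[𝕜] V) (x : V) →
      (β x' : V) = (g : V ≃ₗᵢ[𝕜] V) (β x : V)) ∧
    -- `β` commutes with every symmetry of `Gv ∪ Gw`
    (∀ σ : Equiv.Perm (Sv ∪ Sw : Set V),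
      (∃ M : V ≃ₗᵢ[𝕜] V, ∀ x : (Sv ∪ Sw : Set V), (σ x : V) = M x) →
      (∀ x : (Sv ∪ Sw : Set V), ((x : V) ∈ Sv → (σ x : V) ∈ Sv) ∧
        ((x : V) ∈ Sw → (σ x : V) ∈ Sw)) →
      ∀ (x : Sv) (h1 : (x : V) ∈ Sv ∪ Sw) (h2 : ((β x : V)) ∈ Sv ∪ Sw)
        (hσx : (σ ⟨(x : V), h1⟩ : V) ∈ Sv),
        (σ ⟨(β x : V), h2⟩ : V) = (β ⟨(σ ⟨(x : V), h1⟩ : V), hσx⟩ : V)) :=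
  stmt_12_general 𝕜 V G v w Sv Sw hSv hSw hinj β hβ
end

section
/- Let V be a finite-dimensional real or complex Hilbert space, G ≤ Aut(V) finite, and v, w ∈ V with ‖v‖ ≠ ‖w‖ and such that g ↦ ‖v − gw‖ is injective on G and |Gv| = |Gw| = |G|. Then every permutation σ of Gv ∪ Gw extending to a linear isometry of V maps Gv to itself, and σ is uniquely determined by its restriction to Gv. -/
/-!
A linear isometry preserves norms, so when `‖v‖ ≠ ‖w‖` it cannot move a point of `Gv` into `Gw`
or conversely. If it sends `g v` to `a v` and `g w` to `b w`, then
`‖a v - b w‖ = ‖g v - g w‖ = ‖v - w‖`, that is `‖v - (a⁻¹ b) w‖ = ‖v - 1 w‖`, and injectivity of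
`h ↦ ‖v - h w‖` forces `b = a`. Hence the image of `g w` is determined by the image of `g v`.
-/

theorem Set.mapsTo_of_perm_extension {α : Type*} {S : Set α} (ρ : Equiv.Perm S) {f : α → α}
    (hf : ∀ x : S, (ρ x : α) = f x) : Set.MapsTo f S S := fun x hx =>
  hf ⟨x, hx⟩ ▸ (ρ ⟨x, hx⟩).2

section IsometryOrbit

variable {R E : Type*} [Semiring R] [SeminormedAddCommGroup E] [Module R E]

def isometryOrbit (G : Subgroup (E ≃ₗᵢ[R] E)) (v : E) : Set E :=
  Set.range fun g : G => (g : E ≃ₗᵢ[R] E) v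

variable {G : Subgroup (E ≃ₗᵢ[R] E)} {v w : E}

theorem apply_mem_isometryOrbit (g : G) (v : E) : (g : E ≃ₗᵢ[R] E) v ∈ isometryOrbit G v :=
  ⟨g, rfl⟩

theorem norm_eq_of_mem_isometryOrbit {x : E} (hx : x ∈ isometryOrbit G v) : ‖x‖ = ‖v‖ := by
  obtain ⟨g, rfl⟩ := hx
  exact (g : E ≃ₗᵢ[R] E).norm_map v

theorem LinearIsometry.mapsTo_isometryOrbit_of_norm_ne (hnorm : ‖v‖ ≠ ‖w‖) (M : E →ₗᵢ[R] E)
    (hM : Set.MapsTo M (isometryOrbit G v ∪ isometryOrbit G w)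
      (isometryOrbit G v ∪ isometryOrbit G w)) :
    Set.MapsTo M (isometryOrbit G v) (isometryOrbit G v) := fun x hx =>
  (hM (Or.inl hx)).resolve_right fun hMx =>
    hnorm <| (norm_eq_of_mem_isometryOrbit hx).symm.trans <|
      (M.norm_map x).symm.trans (norm_eq_of_mem_isometryOrbit hMx)

theorem LinearIsometry.mapsTo_isometryOrbits_of_norm_ne (hnorm : ‖v‖ ≠ ‖w‖) (M : E →ₗᵢ[R] E)
    (hM : Set.MapsTo M (isometryOrbit G v ∪ isometryOrbit G w)
      (isometryOrbit G v ∪ isometryOrbit G w)) :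
    Set.MapsTo M (isometryOrbit G v) (isometryOrbit G v) ∧
      Set.MapsTo M (isometryOrbit G w) (isometryOrbit G w) :=
  ⟨M.mapsTo_isometryOrbit_of_norm_ne hnorm hM,
    M.mapsTo_isometryOrbit_of_norm_ne hnorm.symm (Set.union_comm _ _ ▸ hM)⟩

theorem eq_of_norm_apply_sub_apply_eq
    (hinj : Function.Injective fun g : G => ‖v - (g : E ≃ₗᵢ[R] E) w‖) {a b : G}
    (h : ‖(a : E ≃ₗᵢ[R] E) v - (b : E ≃ₗᵢ[R] E) w‖ = ‖v - w‖) : a = b := by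
  have hab : ‖v - ((a⁻¹ * b : G) : E ≃ₗᵢ[R] E) w‖ = ‖v - ((1 : G) : E ≃ₗᵢ[R] E) w‖ := by
    rw [← (a : E ≃ₗᵢ[R] E).norm_map, map_sub]
    simpa using h
  exact inv_mul_eq_one.mp (hinj hab)

theorem LinearIsometry.apply_eq_of_apply_eq
    (hinj : Function.Injective fun g : G => ‖v - (g : E ≃ₗᵢ[R] E) w‖) (M : E →ₗᵢ[R] E) {g a : G}
    (hv : M ((g : E ≃ₗᵢ[R] E) v) = (a : E ≃ₗᵢ[R] E) v)
    (hw : M ((g : E ≃ₗᵢ[R] E) w) ∈ isometryOrbit G w) :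
    M ((g : E ≃ₗᵢ[R] E) w) = (a : E ≃ₗᵢ[R] E) w := by
  obtain ⟨b, hb⟩ := hw
  rw [← hb, eq_of_norm_apply_sub_apply_eq hinj (a := a) (b := b)]
  calc ‖(a : E ≃ₗᵢ[R] E) v - (b : E ≃ₗᵢ[R] E) w‖
      = ‖M ((g : E ≃ₗᵢ[R] E) (v - w))‖ := by simp only [hb, ← hv, map_sub]
    _ = ‖v - w‖ := by rw [M.norm_map, LinearIsometryEquiv.norm_map]

end IsometryOrbit

theorem stmt_13_general (𝕜 : Type*) [RCLike 𝕜] (V : Type*) [NormedAddCommGroup V]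
    [InnerProductSpace 𝕜 V]
    (G : Subgroup (V ≃ₗᵢ[𝕜] V)) (v w : V)
    (Sv Sw : Set V)
    (hSv : Sv = Set.range fun g : G => (g : V ≃ₗᵢ[𝕜] V) v)
    (hSw : Sw = Set.range fun g : G => (g : V ≃ₗᵢ[𝕜] V) w)
    (hnorm : ‖v‖ ≠ ‖w‖)
    (hinj : Function.Injective fun g : G => ‖v - (g : V ≃ₗᵢ[𝕜] V) w‖) :
    ∀ σ τ : Equiv.Perm (Sv ∪ Sw : Set V),
      (∃ M : V ≃ₗᵢ[𝕜] V, ∀ x : (Sv ∪ Sw : Set V), (σ x : V) = M x) →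
      (∃ N : V ≃ₗᵢ[𝕜] V, ∀ x : (Sv ∪ Sw : Set V), (τ x : V) = N x) →
        (∀ x : (Sv ∪ Sw : Set V), (x : V) ∈ Sv → (σ x : V) ∈ Sv) ∧
        ((∀ x : (Sv ∪ Sw : Set V), (x : V) ∈ Sv → σ x = τ x) → σ = τ) := by
  rintro σ τ ⟨M, hM⟩ ⟨N, hN⟩
  obtain rfl : Sv = isometryOrbit G v := hSv
  obtain rfl : Sw = isometryOrbit G w := hSw
  obtain ⟨hMv, hMw⟩ := M.toLinearIsometry.mapsTo_isometryOrbits_of_norm_ne hnorm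
    (Set.mapsTo_of_perm_extension σ hM)
  obtain ⟨-, hNw⟩ := N.toLinearIsometry.mapsTo_isometryOrbits_of_norm_ne hnorm
    (Set.mapsTo_of_perm_extension τ hN)
  refine ⟨fun x hx => hM x ▸ hMv hx, fun hagree => ?_⟩
  ext ⟨x, hx | ⟨g, rfl⟩⟩
  · exact congrArg Subtype.val (hagree _ hx)
  · have hgv := apply_mem_isometryOrbit g v
    have hgw := apply_mem_isometryOrbit g w
    obtain ⟨a, ha⟩ := hMv hgv
    have hNa : N ((g : V ≃ₗᵢ[𝕜] V) v) = (a : V ≃ₗᵢ[𝕜] V) v := by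
      rw [← hN ⟨_, Or.inl hgv⟩, ← hagree _ hgv, hM]
      exact ha.symm
    calc _ = M ((g : V ≃ₗᵢ[𝕜] V) w) := hM _
      _ = (a : V ≃ₗᵢ[𝕜] V) w := M.toLinearIsometry.apply_eq_of_apply_eq hinj ha.symm (hMw hgw)
      _ = N ((g : V ≃ₗᵢ[𝕜] V) w) :=
        (N.toLinearIsometry.apply_eq_of_apply_eq hinj hNa (hNw hgw)).symm
      _ = _ := (hN ⟨_, Or.inr hgw⟩).symm

/-- Orbit pairing lemma, conclusion part: if `‖v‖ ≠ ‖w‖`, `g ↦ ‖v - g w‖` is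
injective on `G`, and both orbits have `|G|` elements, then any permutation of
`Gv ∪ Gw` extending to a linear isometry maps `Gv` to itself and is uniquely
determined by its restriction to `Gv`. -/
theorem stmt_13 (𝕜 : Type*) [RCLike 𝕜] (V : Type*) [NormedAddCommGroup V]
    [InnerProductSpace 𝕜 V] [FiniteDimensional 𝕜 V]
    (G : Subgroup (V ≃ₗᵢ[𝕜] V)) [Finite G] (v w : V)
    (Sv Sw : Set V)
    (hSv : Sv = Set.range fun g : G => (g : V ≃ₗᵢ[𝕜] V) v)
    (hSw : Sw = Set.range fun g : G => (g : V ≃ₗᵢ[𝕜] V) w)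
    (hnorm : ‖v‖ ≠ ‖w‖)
    (hinj : Function.Injective fun g : G => ‖v - (g : V ≃ₗᵢ[𝕜] V) w‖)
    (hcv : Sv.ncard = Nat.card G) (hcw : Sw.ncard = Nat.card G) :
    ∀ σ τ : Equiv.Perm (Sv ∪ Sw : Set V),
      (∃ M : V ≃ₗᵢ[𝕜] V, ∀ x : (Sv ∪ Sw : Set V), (σ x : V) = M x) →
      (∃ N : V ≃ₗᵢ[𝕜] V, ∀ x : (Sv ∪ Sw : Set V), (τ x : V) = N x) →
        (∀ x : (Sv ∪ Sw : Set V), (x : V) ∈ Sv → (σ x : V) ∈ Sv) ∧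
        ((∀ x : (Sv ∪ Sw : Set V), (x : V) ∈ Sv → σ x = τ x) → σ = τ) :=
  stmt_13_general 𝕜 V G v w Sv Sw hSv hSw hnorm hinj
end

section
/- Let G be a finite group acting linearly on a finite-dimensional vector space V over F ∈ {ℝ, ℂ}, and fix a natural number k and integer r ≥ 1. If there exist v₁, …, v_k ∈ V such that the span of Gv₁ ∪ ⋯ ∪ Gv_k has codimension less than r in V, then the set of tuples (v₁, …, v_k) ∈ V^k for which the span of Gv₁ ∪ ⋯ ∪ Gv_k has codimension less than r contains an open dense subset of V^k. -/
/-!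
Index the orbit vectors of `v : Fin k → V` by `Fin k × G` and fix, for the given `v₀`, a
linearly independent subfamily spanning the same space. Requiring that same subfamily of
orbit vectors of `v` to stay independent is an open condition, and it is a dense one: along the
line from `v₀` to any `w`, the independence fails only at the finitely many roots of a
determinant polynomial which does not vanish at `v₀`. Every `v` in this open dense set has
orbit span of dimension at least that of `v₀`.
-/

open Module Polynomial Set Submodule

/-- Sending `c` to the standard basis by a left inverse of `t ↦ ∑ tᵢ cᵢ` turns `c + s • b`
into the rows of `1 + s • B`, whose determinant is a polynomial in `s` with value `1` at `0`. -/
theorem LinearIndependent.finite_setOf_not_linearIndependent_add_smul {K V ι : Type*} [Field K]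
    [AddCommGroup V] [Module K V] [Finite ι] {c : ι → V} (hc : LinearIndependent K c)
    (b : ι → V) : {s : K | ¬ LinearIndependent K (c + s • b)}.Finite := by
  classical
  cases nonempty_fintype ι
  obtain ⟨φ, hφ⟩ := (Fintype.linearCombination K c).exists_leftInverse_of_injective
    (LinearMap.ker_eq_bot.mpr (linearIndependent_iff_injective_fintypeLinearCombination.mp hc))
  have hφc (j : ι) : φ (c j) = Pi.single j 1 := by
    simpa using LinearMap.congr_fun hφ (Pi.single j 1)
  set B : Matrix ι ι K := Matrix.of fun j => φ (b j)
  set P : K[X] := (1 + (X : K[X]) • B.map C).det with hP_def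
  have hP : P ≠ 0 := fun h => by
    simpa [P, eval_det_add_X_smul] using congr_arg (eval 0) h
  have hPs (s : K) : P.eval s = (1 + s • B).det := by
    rw [hP_def, ← coe_evalRingHom, RingHom.map_det]
    congr 1
    ext i j
    by_cases hij : i = j <;> simp [hij, mul_comm s]
  refine (finite_setOfPred_isRoot hP).subset fun s hs => ?_
  have hrows : φ ∘ (c + s • b) = fun j => (1 + s • B) j := by
    ext j i
    simp [hφc, B, Matrix.one_apply, Pi.single_apply, eq_comm]
  by_contra hroot
  have hdet : (1 + s • B).det ≠ 0 := hPs s ▸ hroot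
  exact hs <| .of_comp φ <| hrows ▸ Matrix.linearIndependent_rows_of_det_ne_zero hdet

theorem LinearMap.dense_setOf_linearIndependent {𝕜 E V ι : Type*} [NontriviallyNormedField 𝕜]
    [AddCommGroup E] [Module 𝕜 E] [TopologicalSpace E] [ContinuousAdd E] [ContinuousSMul 𝕜 E]
    [AddCommGroup V] [Module 𝕜 V] [Finite ι] (L : E →ₗ[𝕜] ι → V) {x₀ : E}
    (h : LinearIndependent 𝕜 (L x₀)) : Dense {x | LinearIndependent 𝕜 (L x)} := by
  intro x
  set γ : 𝕜 → E := fun s => x₀ + s • (x - x₀)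
  have hgood : Dense {s : 𝕜 | LinearIndependent 𝕜 (L (γ s))} := by
    convert dense_univ.sdiff_finite
      (h.finite_setOf_not_linearIndependent_add_smul (L (x - x₀))) using 1
    ext s
    simp [γ]
  have hγ : Continuous γ := by fun_prop
  exact closure_mono (image_subset_iff.mpr fun _ hs => hs)
    (hγ.range_subset_closure_image_dense hgood ⟨1, by simp [γ]⟩)

theorem LinearIndependent.finrank_span_range_le_of_comp {K V ι κ : Type*} [Field K]
    [AddCommGroup V] [Module K V] [FiniteDimensional K V] {u w : ι → V} {a : κ → ι}
    (hu : span K (range (u ∘ a)) = span K (range u)) (hua : LinearIndependent K (u ∘ a))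
    (hwa : LinearIndependent K (w ∘ a)) :
    finrank K (span K (range u)) ≤ finrank K (span K (range w)) := by
  have := hua.finite
  cases nonempty_fintype κ
  calc finrank K (span K (range u)) = Fintype.card κ := by rw [← hu, finrank_span_eq_card hua]
    _ = finrank K (span K (range (w ∘ a))) := (finrank_span_eq_card hwa).symm
    _ ≤ finrank K (span K (range w)) := Set.finrank_mono (range_comp_subset_range a w)

section Orbits

variable {𝕜 V G : Type*} [Field 𝕜] [AddCommGroup V] [Module 𝕜 V] [Group G]

def Representation.orbitFamily (ρ : Representation 𝕜 G V) (k : ℕ) :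
    (Fin k → V) →ₗ[𝕜] Fin k × G → V :=
  LinearMap.pi fun p => ρ p.2 ∘ₗ LinearMap.proj p.1

theorem Representation.range_orbitFamily (ρ : Representation 𝕜 G V) {k : ℕ} (v : Fin k → V) :
    range (ρ.orbitFamily k v) = ⋃ i : Fin k, range fun g : G => ρ g (v i) := by
  ext x
  simp [orbitFamily, Prod.exists]

end Orbits

theorem stmt_16_general (𝕜 : Type*) [RCLike 𝕜] (V : Type*) [NormedAddCommGroup V]
    [NormedSpace 𝕜 V] [FiniteDimensional 𝕜 V]
    (G : Type*) [Group G] (ρ : Representation 𝕜 G V)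
    (k : ℕ) (r : ℕ)
    (hex : ∃ v : Fin k → V,
      Module.finrank 𝕜 V - Module.finrank 𝕜
        (Submodule.span 𝕜 (⋃ i : Fin k, Set.range fun g : G => ρ g (v i))) < r) :
    ∃ U : Set (Fin k → V), IsOpen U ∧ Dense U ∧
      U ⊆ {v : Fin k → V |
        Module.finrank 𝕜 V - Module.finrank 𝕜
          (Submodule.span 𝕜 (⋃ i : Fin k, Set.range fun g : G => ρ g (v i))) < r} := by
  obtain ⟨v₀, hv₀⟩ := hex
  obtain ⟨κ, a, -, hspan, hli⟩ := exists_linearIndependent' 𝕜 (ρ.orbitFamily k v₀)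
  have := hli.finite
  let L := LinearMap.funLeft 𝕜 V a ∘ₗ ρ.orbitFamily k
  refine ⟨{v | LinearIndependent 𝕜 (L v)}, ?_, L.dense_setOf_linearIndependent hli, ?_⟩
  · exact isOpen_setOfPred_linearIndependent.preimage L.continuous_of_finiteDimensional
  · intro v hv
    have hle := LinearIndependent.finrank_span_range_le_of_comp (w := ρ.orbitFamily k v)
      hspan hli hv
    rw [ρ.range_orbitFamily, ρ.range_orbitFamily] at hle
    exact (Nat.sub_le_sub_left hle _).trans_lt hv₀

/-- If some `k`-tuple of points has orbits spanning a subspace of codimension `< r`,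
then the set of `k`-tuples whose orbits span a subspace of codimension `< r`
contains an open dense subset of `V^k`. -/
theorem stmt_16 (𝕜 : Type*) [RCLike 𝕜] (V : Type*) [NormedAddCommGroup V]
    [NormedSpace 𝕜 V] [FiniteDimensional 𝕜 V]
    (G : Type*) [Group G] [Finite G] (ρ : Representation 𝕜 G V)
    (k : ℕ) (r : ℕ) (hr : 1 ≤ r)
    (hex : ∃ v : Fin k → V,
      Module.finrank 𝕜 V - Module.finrank 𝕜
        (Submodule.span 𝕜 (⋃ i : Fin k, Set.range fun g : G => ρ g (v i))) < r) :
    ∃ U : Set (Fin k → V), IsOpen U ∧ Dense U ∧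
      U ⊆ {v : Fin k → V |
        Module.finrank 𝕜 V - Module.finrank 𝕜
          (Submodule.span 𝕜 (⋃ i : Fin k, Set.range fun g : G => ρ g (v i))) < r} :=
  stmt_16_general 𝕜 V G ρ k r hex
end

section
/- Let V be a finite-dimensional real or complex Hilbert space, G ≤ Aut(V) a finite group of linear isometries, and v₁, …, v_k ∈ V (k ≥ 3) points such that |Gv_j| = |G| for all j and such that for each 2 ≤ j ≤ k, every permutation of Gv₁ ∪ Gv_j extending to a linear isometry of V equals the restriction of a (necessarily unique) element of G. Then every permutation of Gv₁ ∪ ⋯ ∪ Gv_k that extends to a linear isometry of V and maps each orbit Gv_j to itself equals the restriction of a unique element of G; hence the canonical map G → Aut(Gv₁ ∪ ⋯ ∪ Gv_k) is an isomorphism. -/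
/-!
For `j ≠ 1`, the restriction of `σ` to `Gv₁ ∪ Gv_j` is a permutation extending to a linear
isometry, hence is induced by some `g_j ∈ G`. All the `g_j` send `v₁` to `σ v₁`, and since the
orbit `Gv₁` has `|G|` points, an element of `G` is determined by its value at `v₁`. So the `g_j`
coincide, and their common value induces `σ` on all of `Gv₁ ∪ ⋯ ∪ Gv_k`; uniqueness follows
from the same determination by the value at `v₁`.
-/

open Set

theorem Function.injective_of_ncard_range_eq {α β : Type*} [Finite α] {f : α → β}
    (h : (range f).ncard = Nat.card α) : Function.Injective f := by
  rw [← image_univ, ← ncard_univ] at h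
  exact injOn_univ.1 (injOn_of_ncard_image_eq h)

theorem Equiv.Perm.exists_perm_restrict_of_mapsTo {α : Type*} {s t : Set α} (hts : t ⊆ s)
    (ht : t.Finite) (σ : Equiv.Perm s) (hσ : ∀ x : s, (x : α) ∈ t → (σ x : α) ∈ t) :
    ∃ τ : Equiv.Perm t, ∀ x : t, (τ x : α) = σ (inclusion hts x) := by
  have : Finite t := ht.to_subtype
  let f : t → t := fun x => ⟨σ (inclusion hts x), hσ _ x.2⟩
  have hf : Function.Injective f := fun x y hxy =>
    inclusion_injective hts <| σ.injective <| Subtype.ext <| congrArg (fun z : t => (z : α)) hxy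
  exact ⟨Equiv.ofBijective f (Finite.injective_iff_bijective.1 hf), fun _ => rfl⟩

/-- Multi-orbit theorem, inductive step (`k ≥ 3`): if each pair of orbits
`Gv₁ ∪ Gv_j` has all its isometric symmetries induced by `G`, the orbits are
pairwise disjoint and of size `|G|`, then every permutation of `Gv₁ ∪ ⋯ ∪ Gv_k`
extending to a linear isometry and preserving each orbit is induced by a unique
element of `G`; hence the canonical map `G → Aut(Gv₁ ∪ ⋯ ∪ Gv_k)` is an
isomorphism. -/
theorem stmt_18 (𝕜 : Type*) [RCLike 𝕜] (V : Type*) [NormedAddCommGroup V]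
    [InnerProductSpace 𝕜 V]
    (G : Subgroup (V ≃ₗᵢ[𝕜] V)) [Finite G] (k : ℕ) (hk : 3 ≤ k)
    (v : Fin k → V) (S : Fin k → Set V)
    (hS : ∀ j, S j = Set.range fun g : G => (g : V ≃ₗᵢ[𝕜] V) (v j))
    (hcard : ∀ j, (S j).ncard = Nat.card G)
    (hpair : ∀ j : Fin k, j ≠ (⟨0, by omega⟩ : Fin k) →
      ∀ σ : Equiv.Perm (S (⟨0, by omega⟩ : Fin k) ∪ S j : Set V),
        (∃ M : V ≃ₗᵢ[𝕜] V, ∀ x : (S (⟨0, by omega⟩ : Fin k) ∪ S j : Set V), (σ x : V) = M x) →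
        ∃ g : G, ∀ x : (S (⟨0, by omega⟩ : Fin k) ∪ S j : Set V), (σ x : V) = (g : V ≃ₗᵢ[𝕜] V) x) :
    ∀ σ : Equiv.Perm (⋃ j, S j : Set V),
      (∃ M : V ≃ₗᵢ[𝕜] V, ∀ x : (⋃ j, S j : Set V), (σ x : V) = M x) →
      (∀ (j : Fin k) (x : (⋃ j, S j : Set V)), (x : V) ∈ S j → (σ x : V) ∈ S j) →
      ∃! g : G, ∀ x : (⋃ j, S j : Set V), (σ x : V) = (g : V ≃ₗᵢ[𝕜] V) x := by
  intro σ ⟨M, hM⟩ hpres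
  set i₀ : Fin k := ⟨0, by omega⟩
  have hx₀ : v i₀ ∈ S i₀ := hS i₀ ▸ ⟨1, rfl⟩
  let x₀ : (⋃ j, S j : Set V) := ⟨v i₀, mem_iUnion.2 ⟨i₀, hx₀⟩⟩
  have eq_of_apply_eq : ∀ g g' : G, (g : V ≃ₗᵢ[𝕜] V) (v i₀) = (g' : V ≃ₗᵢ[𝕜] V) (v i₀) → g = g' :=
    fun _ _ h => Function.injective_of_ncard_range_eq (hS i₀ ▸ hcard i₀) h
  have induced_on_pair : ∀ j ≠ i₀, ∃ g : G, ∀ x : (⋃ j, S j : Set V),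
      (x : V) ∈ S i₀ ∪ S j → (σ x : V) = (g : V ≃ₗᵢ[𝕜] V) x := by
    intro j hj
    have hsub : S i₀ ∪ S j ⊆ ⋃ j, S j := union_subset (subset_iUnion S i₀) (subset_iUnion S j)
    obtain ⟨τ, hτ⟩ := Equiv.Perm.exists_perm_restrict_of_mapsTo hsub
      ((hS i₀ ▸ finite_range _).union (hS j ▸ finite_range _)) σ
      (fun x => Or.imp (hpres i₀ x) (hpres j x))
    obtain ⟨g, hg⟩ := hpair j hj τ ⟨M, fun x => (hτ x).trans (hM _)⟩
    exact ⟨g, fun x hx => (hτ ⟨x, hx⟩).symm.trans (hg ⟨x, hx⟩)⟩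
  obtain ⟨g, hg⟩ := induced_on_pair ⟨1, by omega⟩ (by simp [i₀, Fin.ext_iff])
  have hg_induces : ∀ x : (⋃ j, S j : Set V), (σ x : V) = (g : V ≃ₗᵢ[𝕜] V) x := by
    intro x
    obtain ⟨j, hxj⟩ := mem_iUnion.1 x.2
    by_cases hj : j = i₀
    · exact hg x (Or.inl (hj ▸ hxj))
    obtain ⟨g', hg'⟩ := induced_on_pair j hj
    have : g' = g := eq_of_apply_eq _ _ ((hg' x₀ (Or.inl hx₀)).symm.trans (hg x₀ (Or.inl hx₀)))
    exact this ▸ hg' x (Or.inr hxj)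
  exact ⟨g, hg_induces, fun g' hg' => eq_of_apply_eq _ _ ((hg' x₀).symm.trans (hg_induces x₀))⟩
end
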